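/- Let $\Omega\subset\mathbb{R}^n$ be bounded open, $1<p\le q<\infty$, and $F:\mathbb{R}^{N\times n}\to\mathbb{R}$ convex and $C^1$ satisfying $\tfrac1c|\xi|^p-c\le F(\xi)\le c(|\xi|^q+1)$ with $q\le p+1$. If $u\in W^{1,p}(\Omega,\mathbb{R}^N)$ is an $F$-minimizer (i.e. $F(Du)\in L^1(\Omega)$ and $\int_\Omega F(Du)\le\int_\Omega F(Dv)$ for all $v\in W^{1,p}_u(\Omega,\mathbb{R}^N)$), then $F'(Du)\in L^{p/(q-1)}_{loc}(\Omega,\mathbb{R}^{N\times n})$ and $u$ is an $F$-extremal: $\int_\Omega\langle F'(Du),D\varphi\rangle\,dx = 0$ for all $\varphi\in C_c^\infty(\Omega,\mathbb{R}^N)$. -/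

import Mathlib

open MeasureTheory
open scoped RealInnerProductSpace

/-- A scalar test function on an open set `Ω`. -/
def IsScalarTest {n : ℕ} (Ω : Set (EuclideanSpace ℝ (Fin n)))
    (φ : EuclideanSpace ℝ (Fin n) → ℝ) : Prop :=
  ContDiff ℝ (⊤ : ℕ∞) φ ∧ HasCompactSupport φ ∧ tsupport φ ⊆ Ω

/-- A vector-valued test map on an open set `Ω`. -/
def IsVectorTest {n N : ℕ} (Ω : Set (EuclideanSpace ℝ (Fin n)))
    (φ : EuclideanSpace ℝ (Fin n) → EuclideanSpace ℝ (Fin N)) : Prop :=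
  ContDiff ℝ (⊤ : ℕ∞) φ ∧ HasCompactSupport φ ∧ tsupport φ ⊆ Ω

/-- The classical gradient of a map, arranged as an `N × n` matrix
(an element of the Euclidean space indexed by `Fin N × Fin n`). -/
noncomputable def gradMat {n N : ℕ}
    (φ : EuclideanSpace ℝ (Fin n) → EuclideanSpace ℝ (Fin N))
    (x : EuclideanSpace ℝ (Fin n)) : EuclideanSpace ℝ (Fin N × Fin n) :=
  (WithLp.equiv 2 (Fin N × Fin n → ℝ)).symm
    fun pr => fderiv ℝ φ x (EuclideanSpace.single pr.2 1) pr.1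

/-- `Du` is the weak (distributional) gradient of `u` on `Ω`. -/
def IsWeakGradOn {n N : ℕ} (Ω : Set (EuclideanSpace ℝ (Fin n)))
    (u : EuclideanSpace ℝ (Fin n) → EuclideanSpace ℝ (Fin N))
    (Du : EuclideanSpace ℝ (Fin n) → EuclideanSpace ℝ (Fin N × Fin n)) : Prop :=
  ∀ φ : EuclideanSpace ℝ (Fin n) → ℝ, IsScalarTest Ω φ →
    ∀ (i : Fin N) (j : Fin n),
      ∫ x in Ω, u x i * fderiv ℝ φ x (EuclideanSpace.single j 1)
        = - ∫ x in Ω, Du x (i, j) * φ x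

/-- Membership in `W^{1,p}(Ω, ℝ^N)`, encoded through the pair `(u, Du)`. -/
def MemW1p {n N : ℕ} (Ω : Set (EuclideanSpace ℝ (Fin n))) (p : ℝ)
    (u : EuclideanSpace ℝ (Fin n) → EuclideanSpace ℝ (Fin N))
    (Du : EuclideanSpace ℝ (Fin n) → EuclideanSpace ℝ (Fin N × Fin n)) : Prop :=
  IsWeakGradOn Ω u Du ∧
    MemLp u (ENNReal.ofReal p) (volume.restrict Ω) ∧
    MemLp Du (ENNReal.ofReal p) (volume.restrict Ω)

/-- Membership in `W^{1,p}_0(Ω, ℝ^N)`: the pair `(ψ, Dψ)` is a `W^{1,p}`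
limit of smooth compactly supported test maps. -/
def MemW1p0 {n N : ℕ} (Ω : Set (EuclideanSpace ℝ (Fin n))) (p : ℝ)
    (ψ : EuclideanSpace ℝ (Fin n) → EuclideanSpace ℝ (Fin N))
    (Dψ : EuclideanSpace ℝ (Fin n) → EuclideanSpace ℝ (Fin N × Fin n)) : Prop :=
  MemW1p Ω p ψ Dψ ∧
  ∃ φk : ℕ → EuclideanSpace ℝ (Fin n) → EuclideanSpace ℝ (Fin N),
    (∀ k, IsVectorTest Ω (φk k)) ∧
    Filter.Tendsto
      (fun k => eLpNorm (fun x => ψ x - φk k x) (ENNReal.ofReal p)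
        (volume.restrict Ω)) Filter.atTop (nhds 0) ∧
    Filter.Tendsto
      (fun k => eLpNorm (fun x => Dψ x - gradMat (φk k) x) (ENNReal.ofReal p)
        (volume.restrict Ω)) Filter.atTop (nhds 0)

section ConvexHelpers
variable {H : Type*} [NormedAddCommGroup H] [InnerProductSpace ℝ H] [CompleteSpace H]

lemma grad_inner_eq (F : H → ℝ) (ξ η : H) : ⟪gradient F ξ, η⟫ = fderiv ℝ F ξ η :=
  InnerProductSpace.toDual_symm_apply

lemma convex_grad_ineq {F : H → ℝ} (hFconv : ConvexOn ℝ Set.univ F)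
    (hdF : Differentiable ℝ F) (ξ η : H) :
    ⟪gradient F ξ, η⟫ ≤ F (ξ + η) - F ξ := by
  have hline : HasDerivAt (fun t : ℝ => ξ + t • η) η 0 := by
    simpa using ((hasDerivAt_id (0 : ℝ)).smul_const η).const_add ξ
  have h0 : ξ + (0 : ℝ) • η = ξ := by simp
  have hφ : HasDerivAt (fun t : ℝ => F (ξ + t • η)) (fderiv ℝ F ξ η) 0 := by
    have hF' := (hdF (ξ + (0 : ℝ) • η)).hasFDerivAt
    have := hF'.comp_hasDerivAt (0 : ℝ) hline
    simpa [h0, Function.comp_def] using this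
  have hconv : ConvexOn ℝ Set.univ (fun t : ℝ => F (ξ + t • η)) := by
    have he : (fun t : ℝ => F (ξ + t • η)) = F ∘ (AffineMap.lineMap ξ (ξ + η)) := by
      funext t
      simp [AffineMap.lineMap_apply, add_sub_cancel_left, add_comm]
    rw [he]
    simpa using hFconv.comp_affineMap (AffineMap.lineMap ξ (ξ + η))
  have := hconv.le_slope_of_hasDerivAt (Set.mem_univ (0:ℝ)) (Set.mem_univ (1:ℝ)) one_pos hφ
  rw [grad_inner_eq]
  simpa [slope_def_field] using this

lemma convex_combo {F : H → ℝ} (hFconv : ConvexOn ℝ Set.univ F) (ξ η : H) {t : ℝ}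
    (ht0 : 0 ≤ t) (ht1 : t ≤ 1) :
    F (ξ + t • η) - F ξ ≤ t * (F (ξ + η) - F ξ) := by
  have h := hFconv.2 (Set.mem_univ ξ) (Set.mem_univ (ξ + η)) (by linarith : (0:ℝ) ≤ 1 - t) ht0
    (by ring)
  simp only [smul_eq_mul] at h
  have harg : (1 - t) • ξ + t • (ξ + η) = ξ + t • η := by
    rw [smul_add, sub_smul, one_smul]; abel
  rw [harg] at h
  nlinarith [h]

lemma aux_pow {a r s : ℝ} (ha : 0 ≤ a) (hr : 0 ≤ r) (hrs : r ≤ s) :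
    (a + 1) ^ r ≤ 2 ^ s * (a ^ s + 1) := by
  have h1 : (1:ℝ) ≤ a + 1 := by linarith
  have h2 : (a + 1) ^ r ≤ (a + 1) ^ s := Real.rpow_le_rpow_of_exponent_le h1 hrs
  have h3 : a + 1 ≤ 2 * max a 1 := by
    rcases le_total a 1 with h | h
    · rw [max_eq_right h]; linarith
    · rw [max_eq_left h]; linarith
  have h4 : (a + 1) ^ s ≤ (2 * max a 1) ^ s :=
    Real.rpow_le_rpow (by linarith) h3 (le_trans hr hrs)
  have h5 : (2 * max a 1) ^ s = 2 ^ s * (max a 1) ^ s :=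
    Real.mul_rpow (by norm_num) (le_max_of_le_right zero_le_one)
  have h6 : (max a 1) ^ s ≤ a ^ s + 1 := by
    rcases le_total a 1 with h | h
    · rw [max_eq_right h, Real.one_rpow]
      have : (0:ℝ) ≤ a ^ s := Real.rpow_nonneg ha s
      linarith
    · rw [max_eq_left h]
      have : (0:ℝ) ≤ a ^ s := Real.rpow_nonneg ha s
      linarith
  have h7 : (0:ℝ) ≤ 2 ^ s := (Real.rpow_pos_of_pos (by norm_num) s).le
  calc (a + 1) ^ r ≤ (a + 1) ^ s := h2
    _ ≤ 2 ^ s * (max a 1) ^ s := by rw [← h5]; exact h4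
    _ ≤ 2 ^ s * (a ^ s + 1) := by nlinarith [h6]

lemma grad_norm_bound {F : H → ℝ} (hFconv : ConvexOn ℝ Set.univ F)
    (hdF : Differentiable ℝ F) {c q : ℝ} (hc : 0 < c) (hq : 1 ≤ q)
    (hFlow' : ∀ ξ : H, -c ≤ F ξ) (hFup : ∀ ξ : H, F ξ ≤ c * (‖ξ‖ ^ q + 1)) (ξ : H) :
    ‖gradient F ξ‖ ≤ (c * (2 ^ q + 2)) * (‖ξ‖ + 1) ^ (q - 1) := by
  set R : ℝ := ‖ξ‖ + 1 with hRdef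
  have hR1 : (1:ℝ) ≤ R := by rw [hRdef]; linarith [norm_nonneg ξ]
  have hR0 : (0:ℝ) < R := lt_of_lt_of_le one_pos hR1
  have hq0 : (0:ℝ) ≤ q := by linarith
  have hRq1 : (1:ℝ) ≤ R ^ q := by
    calc (1:ℝ) = R ^ (0:ℝ) := (Real.rpow_zero R).symm
      _ ≤ R ^ q := Real.rpow_le_rpow_of_exponent_le hR1 hq0
  have h2q : (0:ℝ) < 2 ^ q := Real.rpow_pos_of_pos (by norm_num) q
  by_cases hg : gradient F ξ = 0
  · rw [hg, norm_zero]
    positivity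
  · set g := gradient F ξ with hgdef
    have hgn : (0:ℝ) < ‖g‖ := norm_pos_iff.mpr hg
    set η : H := (R / ‖g‖) • g with hηdef
    have hinner : ⟪g, η⟫ = R * ‖g‖ := by
      rw [hηdef, real_inner_smul_right, real_inner_self_eq_norm_mul_norm]
      field_simp
    have hnη : ‖η‖ = R := by
      rw [hηdef, norm_smul, Real.norm_eq_abs, abs_of_pos (by positivity)]
      field_simp
    have h1 : R * ‖g‖ ≤ F (ξ + η) - F ξ := by
      rw [← hinner]; exact convex_grad_ineq hFconv hdF ξ η
    have hnorm : ‖ξ + η‖ ≤ 2 * R := by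
      have h := norm_add_le ξ η
      rw [hnη] at h
      have hx : ‖ξ‖ ≤ R := by rw [hRdef]; linarith [norm_nonneg ξ]
      linarith
    have hF2 : F (ξ + η) ≤ c * ((2*R) ^ q + 1) := by
      refine le_trans (hFup _) ?_
      have : ‖ξ + η‖ ^ q ≤ (2*R) ^ q := Real.rpow_le_rpow (norm_nonneg _) hnorm hq0
      nlinarith
    have h2Rq : (2*R) ^ q = 2 ^ q * R ^ q := Real.mul_rpow (by norm_num) hR0.le
    have hchain : R * ‖g‖ ≤ c * (2 ^ q + 2) * R ^ q := by
      have hlow := hFlow' ξ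
      have : F (ξ + η) - F ξ ≤ c * (2 ^ q * R ^ q + 1) + c := by
        rw [← h2Rq]; nlinarith [hF2]
      nlinarith [h1, hRq1, hc]
    have hfin : ‖g‖ ≤ c * (2 ^ q + 2) * R ^ (q - 1) := by
      rw [Real.rpow_sub hR0, Real.rpow_one]
      have he : c * (2 ^ q + 2) * (R ^ q / R) = c * (2 ^ q + 2) * R ^ q / R := by ring
      rw [he, le_div_iff₀ hR0]
      nlinarith [hchain]
    simpa [hRdef] using hfin

variable {F : H → ℝ} {c q : ℝ}

set_option linter.unusedSectionVars false

lemma diff_bound (hFconv : ConvexOn ℝ Set.univ F)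
    (hdF : Differentiable ℝ F) (hc : 0 < c) (hq : 1 ≤ q)
    (hFlow' : ∀ ξ : H, -c ≤ F ξ) (hFup : ∀ ξ : H, F ξ ≤ c * (‖ξ‖ ^ q + 1)) (ξ η : H) :
    |F (ξ + η) - F ξ| ≤ (c * (2 ^ q + 2)) * (‖ξ‖ + ‖η‖ + 1) ^ (q - 1) * ‖η‖ := by
  set C : ℝ := c * (2 ^ q + 2) with hCdef
  have hC0 : 0 < C := by
    have : (0:ℝ) < 2 ^ q := Real.rpow_pos_of_pos (by norm_num) q
    positivity
  have hq10 : (0:ℝ) ≤ q - 1 := by linarith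
  have hmono : ∀ ζ : H, ‖gradient F ζ‖ ≤ C * (‖ξ‖ + ‖η‖ + 1) ^ (q - 1) →
      True := fun _ _ => trivial
  have key : ∀ ζ : H, ‖ζ‖ ≤ ‖ξ‖ + ‖η‖ →
      ‖gradient F ζ‖ ≤ C * (‖ξ‖ + ‖η‖ + 1) ^ (q - 1) := by
    intro ζ hζ
    refine le_trans (grad_norm_bound hFconv hdF hc hq hFlow' hFup ζ) ?_
    have h : (‖ζ‖ + 1) ^ (q-1) ≤ (‖ξ‖ + ‖η‖ + 1) ^ (q-1) :=
      Real.rpow_le_rpow (by positivity) (by linarith) hq10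
    rw [← hCdef]
    exact mul_le_mul_of_nonneg_left h hC0.le
  rw [abs_le]
  constructor
  · -- F ξ - F (ξ + η) ≤ ‖∇F ξ‖ ‖η‖
    have h1 := convex_grad_ineq hFconv hdF ξ η
    have h2 : |⟪gradient F ξ, η⟫| ≤ ‖gradient F ξ‖ * ‖η‖ := abs_real_inner_le_norm _ _
    have h3 := key ξ (by linarith [norm_nonneg η])
    have h4 : ‖gradient F ξ‖ * ‖η‖ ≤ C * (‖ξ‖ + ‖η‖ + 1) ^ (q - 1) * ‖η‖ :=
      mul_le_mul_of_nonneg_right h3 (norm_nonneg η)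
    have := abs_le.mp h2
    linarith [this.1, this.2]
  · -- F (ξ + η) - F ξ ≤ ⟪∇F(ξ+η), η⟫
    have h1 := convex_grad_ineq hFconv hdF (ξ + η) (-η)
    have harg : ξ + η + -η = ξ := by abel
    rw [harg, inner_neg_right] at h1
    have h2 : |⟪gradient F (ξ + η), η⟫| ≤ ‖gradient F (ξ + η)‖ * ‖η‖ :=
      abs_real_inner_le_norm _ _
    have h3 := key (ξ + η) (norm_add_le ξ η)
    have h4 : ‖gradient F (ξ + η)‖ * ‖η‖ ≤ C * (‖ξ‖ + ‖η‖ + 1) ^ (q - 1) * ‖η‖ :=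
      mul_le_mul_of_nonneg_right h3 (norm_nonneg η)
    have := abs_le.mp h2
    linarith [this.1, this.2]

/-- Two-sided bound for the difference quotient, with dominating function
`D * (‖ξ‖^p + 1)` where `D` depends only on `c, p, q, M`. -/
lemma quot_bound (hFconv : ConvexOn ℝ Set.univ F)
    (hdF : Differentiable ℝ F) (hc : 0 < c) {p : ℝ} (hp : 1 ≤ p) (hq : 1 ≤ q)
    (hqp : q ≤ p + 1)
    (hFlow' : ∀ ξ : H, -c ≤ F ξ) (hFup : ∀ ξ : H, F ξ ≤ c * (‖ξ‖ ^ q + 1))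
    {M : ℝ} (hM : 0 ≤ M) (ξ η : H) (hη : ‖η‖ ≤ M) {t : ℝ} (ht0 : 0 < t) (ht1 : t ≤ 1) :
    |(F (ξ + t • η) - F ξ) / t| ≤
      (c * (2 ^ q + 2)) * ((M + 1) ^ (q - 1) * (2 ^ p * (‖ξ‖ ^ p + 1))) * (M + 1) := by
  set C : ℝ := c * (2 ^ q + 2) with hCdef
  have hC0 : 0 < C := by
    have : (0:ℝ) < 2 ^ q := Real.rpow_pos_of_pos (by norm_num) q
    positivity
  have hq10 : (0:ℝ) ≤ q - 1 := by linarith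
  -- the basic bound on the base point scale
  have hbase : (‖ξ‖ + ‖η‖ + 1) ^ (q - 1) ≤ (M + 1) ^ (q - 1) * (2 ^ p * (‖ξ‖ ^ p + 1)) := by
    have h1 : ‖ξ‖ + ‖η‖ + 1 ≤ (M + 1) * (‖ξ‖ + 1) := by nlinarith [norm_nonneg ξ]
    have h2 : (‖ξ‖ + ‖η‖ + 1) ^ (q-1) ≤ ((M + 1) * (‖ξ‖ + 1)) ^ (q-1) :=
      Real.rpow_le_rpow (by positivity) h1 hq10
    have h3 : ((M + 1) * (‖ξ‖ + 1)) ^ (q-1) = (M+1)^(q-1) * (‖ξ‖+1)^(q-1) :=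
      Real.mul_rpow (by linarith) (by positivity)
    have h4 : (‖ξ‖ + 1) ^ (q-1) ≤ 2 ^ p * (‖ξ‖ ^ p + 1) :=
      aux_pow (norm_nonneg ξ) hq10 (by linarith)
    have h5 : (0:ℝ) ≤ (M+1)^(q-1) := Real.rpow_nonneg (by linarith) _
    calc (‖ξ‖ + ‖η‖ + 1) ^ (q-1) ≤ (M+1)^(q-1) * (‖ξ‖+1)^(q-1) := by rw [← h3]; exact h2
      _ ≤ (M+1)^(q-1) * (2 ^ p * (‖ξ‖ ^ p + 1)) := by nlinarith
  have hηM1 : ‖η‖ ≤ M + 1 := by linarith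
  have hBnn : (0:ℝ) ≤ (M + 1) ^ (q - 1) * (2 ^ p * (‖ξ‖ ^ p + 1)) := by positivity
  rw [abs_le]
  constructor
  · -- lower: quotient ≥ ⟪∇F ξ, η⟫ ≥ -‖∇F ξ‖ ‖η‖
    have h1 := convex_grad_ineq hFconv hdF ξ (t • η)
    rw [real_inner_smul_right] at h1
    have hquot : ⟪gradient F ξ, η⟫ ≤ (F (ξ + t • η) - F ξ) / t := by
      rw [le_div_iff₀ ht0]
      nlinarith [h1]
    have h2 : |⟪gradient F ξ, η⟫| ≤ ‖gradient F ξ‖ * ‖η‖ := abs_real_inner_le_norm _ _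
    have h3 := grad_norm_bound hFconv hdF hc hq hFlow' hFup ξ
    rw [← hCdef] at h3
    have h4 : (‖ξ‖ + 1) ^ (q-1) ≤ (M + 1) ^ (q - 1) * (2 ^ p * (‖ξ‖ ^ p + 1)) := by
      refine le_trans ?_ hbase
      exact Real.rpow_le_rpow (by positivity) (by linarith [norm_nonneg η]) hq10
    have h5 : ‖gradient F ξ‖ * ‖η‖ ≤ C * ((M + 1) ^ (q - 1) * (2 ^ p * (‖ξ‖ ^ p + 1))) * (M+1) := by
      have hb1 : ‖gradient F ξ‖ * ‖η‖ ≤ (C * (‖ξ‖+1)^(q-1)) * (M+1) :=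
        mul_le_mul (le_trans h3 le_rfl) hηM1 (norm_nonneg η) (by positivity)
      refine le_trans hb1 ?_
      exact mul_le_mul_of_nonneg_right (mul_le_mul_of_nonneg_left h4 hC0.le) (by linarith)
    have habs := abs_le.mp h2
    linarith [habs.1, habs.2, hquot]
  · -- upper: quotient ≤ F(ξ+η) - F ξ ≤ |...| ≤ bound
    have h1 := convex_combo hFconv ξ η ht0.le ht1
    have hquot : (F (ξ + t • η) - F ξ) / t ≤ F (ξ + η) - F ξ := by
      rw [div_le_iff₀ ht0]
      nlinarith [h1]
    have h2 := diff_bound hFconv hdF hc hq hFlow' hFup ξ η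
    rw [← hCdef] at h2
    have habs := abs_le.mp h2
    have h5 : C * (‖ξ‖ + ‖η‖ + 1) ^ (q - 1) * ‖η‖ ≤
        C * ((M + 1) ^ (q - 1) * (2 ^ p * (‖ξ‖ ^ p + 1))) * (M+1) :=
      mul_le_mul (mul_le_mul_of_nonneg_left hbase hC0.le) hηM1 (norm_nonneg η) (by positivity)
    linarith [habs.2, hquot]


end ConvexHelpers

section GradMat
variable {n N : ℕ} {φ : EuclideanSpace ℝ (Fin n) → EuclideanSpace ℝ (Fin N)}

lemma gradMat_apply (φ : EuclideanSpace ℝ (Fin n) → EuclideanSpace ℝ (Fin N))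
    (x : EuclideanSpace ℝ (Fin n)) (i : Fin N) (j : Fin n) :
    gradMat φ x (i, j) = fderiv ℝ φ x (EuclideanSpace.single j 1) i := rfl

lemma gradMat_continuous (hφ : ContDiff ℝ (⊤ : ℕ∞) φ) : Continuous (gradMat φ) := by
  have h1 : Continuous (fun x => fderiv ℝ φ x) := hφ.continuous_fderiv (by simp)
  refine Continuous.comp ?_ (continuous_pi fun pr => ?_)
  · exact (PiLp.continuous_toLp 2 (fun _ : Fin N × Fin n => ℝ))
  · exact ((EuclideanSpace.proj pr.1).continuous.comp
      (((ContinuousLinearMap.apply ℝ (EuclideanSpace ℝ (Fin N))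
        (EuclideanSpace.single pr.2 1)).continuous).comp h1))

lemma gradMat_eq_zero_of_nmem (x : EuclideanSpace ℝ (Fin n)) (hx : x ∉ tsupport φ) :
    gradMat φ x = 0 := by
  have h : fderiv ℝ φ x = 0 := by
    by_contra h
    exact hx (support_fderiv_subset (𝕜 := ℝ) (Function.mem_support.mpr h))
  unfold gradMat
  rw [h]
  rfl

lemma gradMat_support (hcs : HasCompactSupport φ) : HasCompactSupport (gradMat φ) := by
  apply HasCompactSupport.intro hcs
  intro x hx
  exact gradMat_eq_zero_of_nmem x hx

lemma gradMat_smul (hφd : Differentiable ℝ φ) (t : ℝ) :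
    gradMat (fun y => t • φ y) = fun x => t • gradMat φ x := by
  funext x
  unfold gradMat
  rw [fderiv_fun_const_smul (hφd x)]
  rw [Equiv.symm_apply_eq]
  funext pr
  simp

lemma gradMat_neg (hφd : Differentiable ℝ φ) :
    gradMat (fun y => -φ y) = fun x => -gradMat φ x := by
  have h1 : (fun y => -φ y) = fun y => (-1 : ℝ) • φ y := by funext y; simp
  rw [h1, gradMat_smul hφd]
  funext x
  simp

end GradMat
section Helpers
open Filter

/-- bound for continuous compactly supported functions -/
lemma exists_bound_of_cs {E V : Type*} [TopologicalSpace E] [NormedAddCommGroup V]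
    {f : E → V} (hf : Continuous f) (hcs : HasCompactSupport f) :
    ∃ M : ℝ, 0 ≤ M ∧ ∀ x, ‖f x‖ ≤ M := by
  obtain ⟨C, hC⟩ := (hf.norm).bounded_above_of_compact_support (hcs.comp_left norm_zero)
  refine ⟨max C 0, le_max_right _ _, fun x => ?_⟩
  calc ‖f x‖ ≤ ‖‖f x‖‖ := le_abs_self _
    _ ≤ C := hC x
    _ ≤ max C 0 := le_max_left _ _

lemma fderiv_zero_of_nmem_tsupport {E V : Type*} [NormedAddCommGroup E] [NormedSpace ℝ E]
    [NormedAddCommGroup V] [NormedSpace ℝ V] {f : E → V} {x : E} (hx : x ∉ tsupport f) :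
    fderiv ℝ f x = 0 := by
  by_contra h
  exact hx (support_fderiv_subset (𝕜 := ℝ) (Function.mem_support.mpr h))

/-- the 1-d slice has a derivative at 0 given by the Fréchet derivative. -/
lemma line_hasDerivAt {H : Type*} [NormedAddCommGroup H] [NormedSpace ℝ H]
    {F : H → ℝ} (hdF : Differentiable ℝ F) (ξ η : H) :
    HasDerivAt (fun t : ℝ => F (ξ + t • η)) (fderiv ℝ F ξ η) 0 := by
  have hline : HasDerivAt (fun t : ℝ => ξ + t • η) η 0 := by
    simpa using ((hasDerivAt_id (0 : ℝ)).smul_const η).const_add ξ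
  have h0 : ξ + (0 : ℝ) • η = ξ := by simp
  have hF' := (hdF (ξ + (0 : ℝ) • η)).hasFDerivAt
  have := hF'.comp_hasDerivAt (0 : ℝ) hline
  simpa [h0, Function.comp_def] using this

lemma lint_to_int {α : Type*} [MeasurableSpace α] {μ : MeasureTheory.Measure α} {f g : α → ℝ}
    (hf : MeasureTheory.Integrable f μ) (hg : MeasureTheory.Integrable g μ)
    (hf0 : ∀ x, 0 ≤ f x) (hg0 : ∀ x, 0 ≤ g x)
    (h : ∫⁻ x, ENNReal.ofReal (f x) ∂μ ≤ ∫⁻ x, ENNReal.ofReal (g x) ∂μ) :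
    ∫ x, f x ∂μ ≤ ∫ x, g x ∂μ := by
  rw [MeasureTheory.integral_eq_lintegral_of_nonneg_ae (Filter.Eventually.of_forall hf0) hf.1,
      MeasureTheory.integral_eq_lintegral_of_nonneg_ae (Filter.Eventually.of_forall hg0) hg.1]
  exact (ENNReal.toReal_le_toReal hf.lintegral_lt_top.ne hg.lintegral_lt_top.ne).mpr h

lemma tendsto_inv_succ_nhdsWithin :
    Filter.Tendsto (fun k : ℕ => ((k : ℝ) + 1)⁻¹) Filter.atTop (nhdsWithin 0 {x : ℝ | x ≠ 0}) := by
  rw [tendsto_nhdsWithin_iff]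
  constructor
  · simpa [one_div] using tendsto_one_div_add_atTop_nhds_zero_nat (𝕜 := ℝ)
  · filter_upwards with k
    have : (0:ℝ) < ((k:ℝ)+1)⁻¹ := by positivity
    exact ne_of_gt this

end Helpers

section IBP
open MeasureTheory

variable {n N : ℕ} {Ω : Set (EuclideanSpace ℝ (Fin n))}

lemma test_ibp {φ : EuclideanSpace ℝ (Fin n) → EuclideanSpace ℝ (Fin N)}
    (hφ : IsVectorTest Ω φ) {ψ : EuclideanSpace ℝ (Fin n) → ℝ}
    (hψ : IsScalarTest Ω ψ) (i : Fin N) (j : Fin n) :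
    ∫ x in Ω, φ x i * fderiv ℝ ψ x (EuclideanSpace.single j 1)
      = - ∫ x in Ω, gradMat φ x (i, j) * ψ x := by
  obtain ⟨hφC, hφcs, hφΩ⟩ := hφ
  obtain ⟨hψC, hψcs, hψΩ⟩ := hψ
  have hφd : Differentiable ℝ φ := hφC.differentiable (by simp)
  have hψd : Differentiable ℝ ψ := hψC.differentiable (by simp)
  set v : EuclideanSpace ℝ (Fin n) := EuclideanSpace.single j 1 with hv
  -- the scalar coordinate function
  set f : EuclideanSpace ℝ (Fin n) → ℝ := fun x => φ x i with hf
  have hcomp : (⇑(EuclideanSpace.proj i : EuclideanSpace ℝ (Fin N) →L[ℝ] ℝ) ∘ φ) = f := rfl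
  have hfd : Differentiable ℝ f := by
    rw [← hcomp]
    exact fun x => ((EuclideanSpace.proj i).hasFDerivAt.comp x (hφd x).hasFDerivAt).differentiableAt
  have hfderiv : ∀ x, fderiv ℝ f x v = gradMat φ x (i, j) := by
    intro x
    have h1 : fderiv ℝ f x = (EuclideanSpace.proj i).comp (fderiv ℝ φ x) := by
      rw [← hcomp]
      exact ((EuclideanSpace.proj i).hasFDerivAt.comp x (hφd x).hasFDerivAt).fderiv
    rw [h1]
    rfl
  -- continuity facts
  have hfc : Continuous f := (EuclideanSpace.proj i).continuous.comp hφC.continuous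
  have hψ'c : Continuous (fun x => fderiv ℝ ψ x v) :=
    (ContinuousLinearMap.apply ℝ ℝ v).continuous.comp (hψC.continuous_fderiv (by simp))
  have hf'c : Continuous (fun x => fderiv ℝ f x v) := by
    have : (fun x => fderiv ℝ f x v) = fun x => gradMat φ x (i, j) := funext hfderiv
    rw [this]
    exact (EuclideanSpace.proj (i, j)).continuous.comp (gradMat_continuous hφC)
  -- compact support facts
  have hcs1 : HasCompactSupport (fun x => f x * fderiv ℝ ψ x v) :=
    HasCompactSupport.intro hψcs fun x hx => by
      rw [fderiv_zero_of_nmem_tsupport hx]; simp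
  have hcs2 : HasCompactSupport (fun x => fderiv ℝ f x v * ψ x) :=
    HasCompactSupport.intro hψcs fun x hx => by
      rw [image_eq_zero_of_notMem_tsupport hx, mul_zero]
  have hcs3 : HasCompactSupport (fun x => f x * ψ x) :=
    HasCompactSupport.intro hψcs fun x hx => by
      rw [image_eq_zero_of_notMem_tsupport hx, mul_zero]
  -- global integrability
  have hI1 : Integrable (fun x => f x * fderiv ℝ ψ x v) volume :=
    (hfc.mul hψ'c).integrable_of_hasCompactSupport hcs1
  have hI2 : Integrable (fun x => fderiv ℝ f x v * ψ x) volume :=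
    (hf'c.mul hψC.continuous).integrable_of_hasCompactSupport hcs2
  have hI3 : Integrable (fun x => f x * ψ x) volume :=
    (hfc.mul hψC.continuous).integrable_of_hasCompactSupport hcs3
  have hglob := integral_mul_fderiv_eq_neg_fderiv_mul_of_integrable hI2 hI1 hI3 (fun x _ => hfd x) (fun x _ => hψd x)
  -- reduce set integrals to global ones
  have hL : ∫ x in Ω, φ x i * fderiv ℝ ψ x v = ∫ x, f x * fderiv ℝ ψ x v := by
    apply setIntegral_eq_integral_of_forall_compl_eq_zero
    intro x hx
    have : φ x = 0 := image_eq_zero_of_notMem_tsupport (fun hmem => hx (hφΩ hmem))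
    simp [this]
  have hR : ∫ x in Ω, gradMat φ x (i, j) * ψ x = ∫ x, fderiv ℝ f x v * ψ x := by
    rw [show (fun x => fderiv ℝ f x v * ψ x) = fun x => gradMat φ x (i, j) * ψ x from
      funext fun x => by rw [hfderiv]]
    apply setIntegral_eq_integral_of_forall_compl_eq_zero
    intro x hx
    have : gradMat φ x = 0 :=
      gradMat_eq_zero_of_nmem x (fun hmem => hx (hφΩ hmem))
    simp [this]
  rw [hL, hR, hglob]

end IBP

set_option maxHeartbeats 4000000 in
theorem stmt19 {n N : ℕ} (Ω : Set (EuclideanSpace ℝ (Fin n)))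
    (hΩo : IsOpen Ω) (hΩb : Bornology.IsBounded Ω)
    (p q c : ℝ) (hp : 1 < p) (hpq : p ≤ q) (hqp : q ≤ p + 1) (hc : 0 < c)
    (F : EuclideanSpace ℝ (Fin N × Fin n) → ℝ)
    (hFconv : ConvexOn ℝ Set.univ F) (hFC1 : ContDiff ℝ 1 F)
    (hFlow : ∀ ξ, (1 / c) * ‖ξ‖ ^ p - c ≤ F ξ)
    (hFup : ∀ ξ, F ξ ≤ c * (‖ξ‖ ^ q + 1))
    (u : EuclideanSpace ℝ (Fin n) → EuclideanSpace ℝ (Fin N))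
    (Du : EuclideanSpace ℝ (Fin n) → EuclideanSpace ℝ (Fin N × Fin n))
    (hu : MemW1p Ω p u Du)
    (hFDu : Integrable (fun x => F (Du x)) (volume.restrict Ω))
    (hmin : ∀ (v : EuclideanSpace ℝ (Fin n) → EuclideanSpace ℝ (Fin N))
      (Dv : EuclideanSpace ℝ (Fin n) → EuclideanSpace ℝ (Fin N × Fin n)),
      MemW1p Ω p v Dv →
      MemW1p0 Ω p (fun x => v x - u x) (fun x => Dv x - Du x) →
      ∫⁻ x in Ω, ENNReal.ofReal (F (Du x) + c)
        ≤ ∫⁻ x in Ω, ENNReal.ofReal (F (Dv x) + c)) :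
    (∀ K : Set (EuclideanSpace ℝ (Fin n)), IsCompact K → K ⊆ Ω →
      MemLp (fun x => gradient F (Du x)) (ENNReal.ofReal (p / (q - 1)))
        (volume.restrict K)) ∧
    ∀ φ : EuclideanSpace ℝ (Fin n) → EuclideanSpace ℝ (Fin N),
      IsVectorTest Ω φ →
      ∫ x in Ω, ⟪gradient F (Du x), gradMat φ x⟫ = 0 := by
  classical
  have hp1 : (1:ℝ) ≤ p := hp.le
  have hq1 : (1:ℝ) ≤ q := le_trans hp1 hpq
  have hp0 : (0:ℝ) < p := lt_trans one_pos hp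
  have hq10 : (0:ℝ) < q - 1 := by linarith
  have hFd : Differentiable ℝ F := hFC1.differentiable one_ne_zero
  have hFlow' : ∀ ξ, -c ≤ F ξ := fun ξ => by
    have h := hFlow ξ
    have h2 : (0:ℝ) ≤ 1/c * ‖ξ‖ ^ p := by positivity
    linarith
  haveI hfinΩ : IsFiniteMeasure (volume.restrict Ω) :=
    ⟨by rw [Measure.restrict_apply_univ]; exact hΩb.measure_lt_top⟩
  have hGcont : Continuous (fun ξ : EuclideanSpace ℝ (Fin N × Fin n) => gradient F ξ) := by
    have h1 : Continuous (fderiv ℝ F) := hFC1.continuous_fderiv one_ne_zero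
    exact (InnerProductSpace.toDual ℝ
      (EuclideanSpace ℝ (Fin N × Fin n))).symm.continuous.comp h1
  have hGbound : ∀ ξ, ‖gradient F ξ‖ ≤ (c * (2 ^ q + 2)) * (‖ξ‖ + 1) ^ (q - 1) :=
    grad_norm_bound hFconv hFd hc hq1 hFlow' hFup
  have hDuM : AEStronglyMeasurable Du (volume.restrict Ω) := hu.2.2.1
  have hDup : Integrable (fun x => ‖Du x‖ ^ p) (volume.restrict Ω) := by
    have hne : ENNReal.ofReal p ≠ 0 :=
      fun h => absurd (ENNReal.ofReal_eq_zero.mp h) (not_le.mpr hp0)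
    have h := hu.2.2.integrable_norm_rpow hne (by simp)
    simpa [ENNReal.toReal_ofReal hp0.le] using h
  constructor
  · -- local integrability of the gradient
    intro K hK hKΩ
    haveI : IsFiniteMeasure (volume.restrict K) :=
      ⟨by rw [Measure.restrict_apply_univ]; exact hK.measure_lt_top⟩
    have hres : volume.restrict K ≤ volume.restrict Ω := Measure.restrict_mono hKΩ le_rfl
    have hDuK : MemLp Du (ENNReal.ofReal p) (volume.restrict K) :=
      MemLp.mono_measure hres hu.2.2
    have hgK : MemLp (fun x => ‖Du x‖ + 1) (ENNReal.ofReal p) (volume.restrict K) :=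
      hDuK.norm.add (memLp_const 1)
    have h2 := hgK.norm_rpow_div (ENNReal.ofReal (q-1))
    rw [← ENNReal.ofReal_div_of_pos hq10, ENNReal.toReal_ofReal hq10.le] at h2
    refine MemLp.of_le_mul (c := c * (2 ^ q + 2)) h2
      (hGcont.comp_aestronglyMeasurable hDuK.1) ?_
    filter_upwards with x
    have hb := hGbound (Du x)
    have h1 : ‖(‖Du x‖ + 1 : ℝ)‖ = ‖Du x‖ + 1 := Real.norm_of_nonneg (by positivity)
    rw [h1, Real.norm_of_nonneg (Real.rpow_nonneg (by positivity) _)]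
    exact hb
  · -- Euler-Lagrange
    have EL_key : ∀ φ : EuclideanSpace ℝ (Fin n) → EuclideanSpace ℝ (Fin N),
        IsVectorTest Ω φ → 0 ≤ ∫ x in Ω, ⟪gradient F (Du x), gradMat φ x⟫ := by
      intro φ hφ
      obtain ⟨hφC, hφcs, hφΩ⟩ := hφ
      have hφd : Differentiable ℝ φ := hφC.differentiable (by simp)
      have hφcont := hφC.continuous
      have hηcont : Continuous (gradMat φ) := gradMat_continuous hφC
      have hηcs : HasCompactSupport (gradMat φ) := gradMat_support hφcs
      obtain ⟨M, hM0, hM⟩ := exists_bound_of_cs hηcont hηcs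
      obtain ⟨Mφ, hMφ0, hMφ⟩ := exists_bound_of_cs hφcont hφcs
      set η := gradMat φ with hηdef
      set K0 : ℝ := (c * (2 ^ q + 2)) * ((M + 1) ^ (q - 1)) * (2 ^ p) * (M + 1) with hK0
      have h2q : (0:ℝ) < 2 ^ q := Real.rpow_pos_of_pos (by norm_num) q
      have h2p : (0:ℝ) < 2 ^ p := Real.rpow_pos_of_pos (by norm_num) p
      have hM1q : (0:ℝ) ≤ (M+1) ^ (q-1) := Real.rpow_nonneg (by linarith) _
      have hK0nn : 0 ≤ K0 := by rw [hK0]; positivity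
      set Bnd : EuclideanSpace ℝ (Fin n) → ℝ := fun x => K0 * (‖Du x‖ ^ p + 1) with hBnd
      have hBnn : ∀ x, 0 ≤ Bnd x := fun x => by
        have : (0:ℝ) ≤ ‖Du x‖ ^ p := Real.rpow_nonneg (norm_nonneg _) _
        rw [hBnd]
        exact mul_nonneg hK0nn (by linarith)
      have hBint : Integrable Bnd (volume.restrict Ω) :=
        (hDup.add (integrable_const 1)).const_mul K0
      have hquot' : ∀ (x : EuclideanSpace ℝ (Fin n)) {t : ℝ}, 0 < t → t ≤ 1 →
          |(F (Du x + t • η x) - F (Du x)) / t| ≤ Bnd x := by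
        intro x t ht0 ht1
        have h := quot_bound hFconv hFd hc hp1 hq1 hqp hFlow' hFup hM0 (Du x) (η x) (hM x)
          ht0 ht1
        calc |(F (Du x + t • η x) - F (Du x)) / t| ≤ _ := h
          _ = Bnd x := by rw [hBnd, hK0]; ring
      have hshift_meas : ∀ t : ℝ,
          AEStronglyMeasurable (fun x => F (Du x + t • η x)) (volume.restrict Ω) := fun t =>
        hFC1.continuous.comp_aestronglyMeasurable
          (hDuM.add ((hηcont.const_smul t).aestronglyMeasurable))
      have hFDv_int : ∀ {t : ℝ}, 0 < t → t ≤ 1 →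
          Integrable (fun x => F (Du x + t • η x)) (volume.restrict Ω) := by
        intro t ht0 ht1
        have hdiff : Integrable (fun x => F (Du x + t • η x) - F (Du x))
            (volume.restrict Ω) := by
          refine Integrable.mono' hBint ((hshift_meas t).sub hFDu.1) ?_
          filter_upwards with x
          have h := hquot' x ht0 ht1
          rw [abs_div, abs_of_pos ht0] at h
          rw [Real.norm_eq_abs]
          calc |F (Du x + t • η x) - F (Du x)|
              = |F (Du x + t • η x) - F (Du x)| / t * t := by field_simp
            _ ≤ Bnd x * t := mul_le_mul_of_nonneg_right h ht0.le
            _ ≤ Bnd x * 1 := mul_le_mul_of_nonneg_left ht1 (hBnn x)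
            _ = Bnd x := mul_one _
        exact (hFDu.add hdiff).congr (Filter.Eventually.of_forall fun x => by
          show F (Du x) + (F (Du x + t • η x) - F (Du x)) = F (Du x + t • η x); ring)
      -- minimality gives the basic inequality
      have hmin_int : ∀ {t : ℝ}, 0 < t → t ≤ 1 →
          ∫ x in Ω, F (Du x) ≤ ∫ x in Ω, F (Du x + t • η x) := by
        intro t ht0 ht1
        have hmem_tφ : MemLp (fun x => t • φ x) (ENNReal.ofReal p) (volume.restrict Ω) :=
          MemLp.of_bound ((hφcont.const_smul t).aestronglyMeasurable) (|t| * Mφ)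
            (Filter.Eventually.of_forall fun x => by
              rw [norm_smul, Real.norm_eq_abs]
              exact mul_le_mul_of_nonneg_left (hMφ x) (abs_nonneg t))
        have hmem_tη : MemLp (fun x => t • η x) (ENNReal.ofReal p) (volume.restrict Ω) :=
          MemLp.of_bound ((hηcont.const_smul t).aestronglyMeasurable) (|t| * M)
            (Filter.Eventually.of_forall fun x => by
              rw [norm_smul, Real.norm_eq_abs]
              exact mul_le_mul_of_nonneg_left (hM x) (abs_nonneg t))
        -- weak gradients
        have hvweak : IsWeakGradOn Ω (fun x => u x + t • φ x) (fun x => Du x + t • η x) := by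
          intro ψ hψ i j
          have hIBP := test_ibp ⟨hφC, hφcs, hφΩ⟩ hψ i j
          have hbase := hu.1 ψ hψ i j
          obtain ⟨hψC, hψcs, hψΩ⟩ := hψ
          set v0 : EuclideanSpace ℝ (Fin n) := EuclideanSpace.single j 1 with hv0
          have hψ'c : Continuous (fun x => fderiv ℝ ψ x v0) :=
            (ContinuousLinearMap.apply ℝ ℝ v0).continuous.comp (hψC.continuous_fderiv (by simp))
          have hψ'cs : HasCompactSupport (fun x => fderiv ℝ ψ x v0) :=
            HasCompactSupport.intro hψcs fun x hx => by
              rw [fderiv_zero_of_nmem_tsupport hx]; rfl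
          obtain ⟨Mψ', hMψ'0, hMψ'⟩ := exists_bound_of_cs hψ'c hψ'cs
          obtain ⟨Mψ, hMψ0, hMψ⟩ := exists_bound_of_cs hψC.continuous hψcs
          have hu1 : Integrable u (volume.restrict Ω) :=
            memLp_one_iff_integrable.mp
              (hu.2.1.mono_exponent (ENNReal.one_le_ofReal.mpr hp1))
          have hDu1 : Integrable Du (volume.restrict Ω) :=
            memLp_one_iff_integrable.mp
              (hu.2.2.mono_exponent (ENNReal.one_le_ofReal.mpr hp1))
          have hui : Integrable (fun x => u x i) (volume.restrict Ω) :=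
            ContinuousLinearMap.integrable_comp (EuclideanSpace.proj i : EuclideanSpace ℝ (Fin N) →L[ℝ] ℝ) hu1
          have hDuij : Integrable (fun x => Du x (i,j)) (volume.restrict Ω) :=
            ContinuousLinearMap.integrable_comp (EuclideanSpace.proj (i,j) : EuclideanSpace ℝ (Fin N × Fin n) →L[ℝ] ℝ) hDu1
          have hA : Integrable (fun x => u x i * fderiv ℝ ψ x v0) (volume.restrict Ω) :=
            (hui.bdd_mul hψ'c.aestronglyMeasurable (c := Mψ') (Filter.Eventually.of_forall hMψ')).congr
              (Filter.Eventually.of_forall fun x => mul_comm _ _)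
          have hB : Integrable (fun x => Du x (i,j) * ψ x) (volume.restrict Ω) :=
            (hDuij.bdd_mul hψC.continuous.aestronglyMeasurable (c := Mψ) (Filter.Eventually.of_forall hMψ)).congr
              (Filter.Eventually.of_forall fun x => mul_comm _ _)
          have hCint : Integrable (fun x => φ x i * fderiv ℝ ψ x v0) (volume.restrict Ω) := by
            have hc1 : Continuous fun x => φ x i * fderiv ℝ ψ x v0 :=
              ((EuclideanSpace.proj i).continuous.comp hφcont).mul hψ'c
            have hcs : HasCompactSupport fun x => φ x i * fderiv ℝ ψ x v0 :=
              HasCompactSupport.intro hφcs fun x hx => by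
                rw [image_eq_zero_of_notMem_tsupport hx]; simp
            exact (hc1.integrable_of_hasCompactSupport hcs).restrict
          have hDint : Integrable (fun x => η x (i,j) * ψ x) (volume.restrict Ω) := by
            have hc1 : Continuous fun x => η x (i,j) * ψ x :=
              ((EuclideanSpace.proj (i,j)).continuous.comp hηcont).mul hψC.continuous
            have hcs : HasCompactSupport fun x => η x (i,j) * ψ x :=
              HasCompactSupport.intro hψcs fun x hx => by
                rw [image_eq_zero_of_notMem_tsupport hx, mul_zero]
            exact (hc1.integrable_of_hasCompactSupport hcs).restrict
          show ∫ x in Ω, (u x + t • φ x) i * fderiv ℝ ψ x v0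
              = - ∫ x in Ω, (Du x + t • η x) (i,j) * ψ x
          have e1 : ∀ x : EuclideanSpace ℝ (Fin n), (u x + t • φ x) i * fderiv ℝ ψ x v0
              = u x i * fderiv ℝ ψ x v0 + t * (φ x i * fderiv ℝ ψ x v0) := fun x => by
            rw [PiLp.add_apply, PiLp.smul_apply, smul_eq_mul]; ring
          have e2 : ∀ x : EuclideanSpace ℝ (Fin n), (Du x + t • η x) (i,j) * ψ x
              = Du x (i,j) * ψ x + t * (η x (i,j) * ψ x) := fun x => by
            rw [PiLp.add_apply, PiLp.smul_apply, smul_eq_mul]; ring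
          calc ∫ x in Ω, (u x + t • φ x) i * fderiv ℝ ψ x v0
              = ∫ x in Ω, (u x i * fderiv ℝ ψ x v0 + t * (φ x i * fderiv ℝ ψ x v0)) := by
                congr 1; funext x; exact e1 x
            _ = (∫ x in Ω, u x i * fderiv ℝ ψ x v0)
                + t * ∫ x in Ω, φ x i * fderiv ℝ ψ x v0 := by
                rw [integral_add hA (hCint.const_mul t), integral_const_mul]
            _ = (- ∫ x in Ω, Du x (i,j) * ψ x) + t * - ∫ x in Ω, η x (i,j) * ψ x := by
                rw [hbase, hIBP]
            _ = - ((∫ x in Ω, Du x (i,j) * ψ x) + t * ∫ x in Ω, η x (i,j) * ψ x) := by ring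
            _ = - ∫ x in Ω, (Du x (i,j) * ψ x + t * (η x (i,j) * ψ x)) := by
                rw [integral_add hB (hDint.const_mul t), integral_const_mul]
            _ = - ∫ x in Ω, (Du x + t • η x) (i,j) * ψ x := by
                congr 1; apply integral_congr_ae; filter_upwards with x; exact (e2 x).symm
        have hvmem : MemW1p Ω p (fun x => u x + t • φ x) (fun x => Du x + t • η x) :=
          ⟨hvweak, hu.2.1.add hmem_tφ, hu.2.2.add hmem_tη⟩
        have h0weak : IsWeakGradOn Ω (fun x => t • φ x) (fun x => t • η x) := by
          intro ψ hψ i j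
          have hIBP := test_ibp ⟨hφC, hφcs, hφΩ⟩ hψ i j
          show ∫ x in Ω, (t • φ x) i * fderiv ℝ ψ x (EuclideanSpace.single j 1)
              = - ∫ x in Ω, (t • η x) (i,j) * ψ x
          have e1 : ∀ x : EuclideanSpace ℝ (Fin n),
              (t • φ x) i * fderiv ℝ ψ x (EuclideanSpace.single j 1)
              = t * (φ x i * fderiv ℝ ψ x (EuclideanSpace.single j 1)) := fun x => by
            rw [PiLp.smul_apply, smul_eq_mul]; ring
          have e2 : ∀ x : EuclideanSpace ℝ (Fin n), (t • η x) (i,j) * ψ x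
              = t * (η x (i,j) * ψ x) := fun x => by
            rw [PiLp.smul_apply, smul_eq_mul]; ring
          calc ∫ x in Ω, (t • φ x) i * fderiv ℝ ψ x (EuclideanSpace.single j 1)
              = ∫ x in Ω, t * (φ x i * fderiv ℝ ψ x (EuclideanSpace.single j 1)) := by
                congr 1; funext x; exact e1 x
            _ = t * ∫ x in Ω, φ x i * fderiv ℝ ψ x (EuclideanSpace.single j 1) :=
                integral_const_mul _ _
            _ = t * - ∫ x in Ω, η x (i,j) * ψ x := by rw [hIBP]
            _ = - ∫ x in Ω, t * (η x (i,j) * ψ x) := by rw [integral_const_mul]; ring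
            _ = - ∫ x in Ω, (t • η x) (i,j) * ψ x := by
                congr 1; apply integral_congr_ae; filter_upwards with x; exact (e2 x).symm
        have htest : IsVectorTest Ω (fun x => t • φ x) := by
          refine ⟨hφC.const_smul t, HasCompactSupport.intro hφcs fun x hx => by
            rw [image_eq_zero_of_notMem_tsupport hx, smul_zero], ?_⟩
          refine subset_trans (closure_mono ?_) hφΩ
          intro x hx
          simp only [Function.mem_support] at hx ⊢
          intro h0; exact hx (by rw [h0, smul_zero])
        have hsub1 : (fun x => (u x + t • φ x) - u x) = fun x => t • φ x := by
          funext x; abel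
        have hsub2 : (fun x => (Du x + t • η x) - Du x) = fun x => t • η x := by
          funext x; abel
        have hgm : gradMat (fun y => t • φ y) = fun x => t • η x := gradMat_smul hφd t
        have hMW0 : MemW1p0 Ω p (fun x => (u x + t • φ x) - u x)
            (fun x => (Du x + t • η x) - Du x) := by
          rw [hsub1, hsub2]
          refine ⟨⟨h0weak, hmem_tφ, hmem_tη⟩,
            ⟨fun _ => fun x => t • φ x, fun _ => htest, ?_, ?_⟩⟩
          · simp only [sub_self]
            simp only [eLpNorm_zero']
            exact tendsto_const_nhds
          · simp only [hgm, sub_self]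
            simp only [eLpNorm_zero']
            exact tendsto_const_nhds
        have hlin := hmin (fun x => u x + t • φ x) (fun x => Du x + t • η x) hvmem hMW0
        have hnn1 : ∀ x, 0 ≤ F (Du x) + c := fun x => by
          have h1 := hFlow (Du x)
          have h2 : (0:ℝ) ≤ 1/c * ‖Du x‖ ^ p := by positivity
          linarith
        have hnn2 : ∀ x, 0 ≤ F (Du x + t • η x) + c := fun x => by
          have h1 := hFlow (Du x + t • η x)
          have h2 : (0:ℝ) ≤ 1/c * ‖Du x + t • η x‖ ^ p := by positivity
          linarith
        have hI1 : Integrable (fun x => F (Du x) + c) (volume.restrict Ω) :=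
          hFDu.add (integrable_const c)
        have hI2 : Integrable (fun x => F (Du x + t • η x) + c) (volume.restrict Ω) :=
          (hFDv_int ht0 ht1).add (integrable_const c)
        have hle := lint_to_int hI1 hI2 hnn1 hnn2 hlin
        rw [integral_add hFDu (integrable_const c),
          integral_add (hFDv_int ht0 ht1) (integrable_const c)] at hle
        linarith
      -- difference quotients converge to the inner product
      set fk : ℕ → EuclideanSpace ℝ (Fin n) → ℝ :=
        fun k x => (F (Du x + ((k:ℝ)+1)⁻¹ • η x) - F (Du x)) / ((k:ℝ)+1)⁻¹ with hfk
      have htk0 : ∀ k : ℕ, (0:ℝ) < ((k:ℝ)+1)⁻¹ := fun k => by positivity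
      have htk1 : ∀ k : ℕ, ((k:ℝ)+1)⁻¹ ≤ 1 := fun k => by
        rw [inv_le_one_iff₀]
        right
        have : (0:ℝ) ≤ (k:ℝ) := Nat.cast_nonneg k
        linarith
      have hfk_meas : ∀ k, AEStronglyMeasurable (fk k) (volume.restrict Ω) := fun k =>
        ((hshift_meas _).sub hFDu.1).mul_const _
      have hfk_bound : ∀ k, ∀ᵐ x ∂(volume.restrict Ω), ‖fk k x‖ ≤ Bnd x := fun k =>
        Filter.Eventually.of_forall fun x => by
          rw [Real.norm_eq_abs]
          exact hquot' x (htk0 k) (htk1 k)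
      have hlim : ∀ᵐ x ∂(volume.restrict Ω),
          Filter.Tendsto (fun k => fk k x) Filter.atTop
            (nhds ⟪gradient F (Du x), η x⟫) := by
        refine Filter.Eventually.of_forall fun x => ?_
        have hd : HasDerivAt (fun s : ℝ => F (Du x + s • η x))
            (fderiv ℝ F (Du x) (η x)) 0 := line_hasDerivAt hFd (Du x) (η x)
        have hs := hasDerivAt_iff_tendsto_slope.mp hd
        have hcomp := hs.comp tendsto_inv_succ_nhdsWithin
        rw [grad_inner_eq]
        refine hcomp.congr fun k => ?_
        show slope (fun s : ℝ => F (Du x + s • η x)) 0 (((k:ℝ)+1)⁻¹) = fk k x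
        rw [slope_def_field, hfk]
        simp
      have hInonneg : ∀ k, 0 ≤ ∫ x in Ω, fk k x := by
        intro k
        have hint : ∫ x in Ω, fk k x
            = (∫ x in Ω, (F (Du x + ((k:ℝ)+1)⁻¹ • η x) - F (Du x))) / ((k:ℝ)+1)⁻¹ :=
          integral_div _ _
        rw [hint, integral_sub (hFDv_int (htk0 k) (htk1 k)) hFDu]
        have := hmin_int (htk0 k) (htk1 k)
        exact div_nonneg (by linarith) (htk0 k).le
      have htend := tendsto_integral_of_dominated_convergence Bnd hfk_meas hBint
        hfk_bound hlim
      exact ge_of_tendsto' htend hInonneg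
    intro φ0 hφ0
    have h1 := EL_key φ0 hφ0
    have hφ0d : Differentiable ℝ φ0 := hφ0.1.differentiable (by simp)
    have hneg : IsVectorTest Ω (fun x => -φ0 x) := by
      obtain ⟨ha, hb, hc3⟩ := hφ0
      refine ⟨ha.neg, HasCompactSupport.intro hb fun x hx => by
        rw [image_eq_zero_of_notMem_tsupport hx, neg_zero], ?_⟩
      refine subset_trans (closure_mono ?_) hc3
      intro x hx
      simp only [Function.mem_support] at hx ⊢
      intro h0; exact hx (by rw [h0, neg_zero])
    have h2 := EL_key _ hneg
    rw [gradMat_neg hφ0d] at h2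
    simp only [inner_neg_right] at h2
    rw [integral_neg] at h2
    linarith
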